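/- Fix real numbers θ_0 with 1/2 < θ_0 < 691/1318 and c_1 with 0 ≤ c_1 < 8×10^{-6} such that θ_0·(1 − c_1) > 0.52427. For a natural number m set k_0 := m^2·e^{4m/(θ_0(1−c_1)) + 8}, A := log(2k_0) − 2·log log(2k_0), T := (e^A − 1)/A, γ := (1/A)·(1 − 1/(1 + A·T)), and C := (k_0/γ^2) · 0.168 / ( (θ_0/2 − 1/(100000·m))^2 · (2/(3θ_0) − 1) ) · 1/(1.063·(1 − c_1)). Then for all sufficiently large m one has log C ≤ 7.63·m + 4·log m + 21·log 2. -/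
import Mathlib


/-- `k₀(m) = m² e^{4m/(θ₀(1-c₁)) + 8}` (as a real number). -/
noncomputable def paperK0 (θ0 c1 : ℝ) (m : ℕ) : ℝ :=
  (m : ℝ) ^ 2 * Real.exp (4 * m / (θ0 * (1 - c1)) + 8)

/-- `A = log (2k₀) - 2 log log (2k₀)` (here `x` plays the role of `k₀`). -/
noncomputable def paperA' (x : ℝ) : ℝ := Real.log (2 * x) - 2 * Real.log (Real.log (2 * x))

/-- `T = (e^A - 1)/A`. -/
noncomputable def paperT' (x : ℝ) : ℝ := (Real.exp (paperA' x) - 1) / paperA' x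

/-- `γ = (1/A)(1 - 1/(1 + A T))`. -/
noncomputable def paperGamma' (x : ℝ) : ℝ :=
  (1 / paperA' x) * (1 - 1 / (1 + paperA' x * paperT' x))

/-- The constant `C` of the paper. -/
noncomputable def paperC (θ0 c1 : ℝ) (m : ℕ) : ℝ :=
  (paperK0 θ0 c1 m / (paperGamma' (paperK0 θ0 c1 m)) ^ 2) *
    (0.168 / ((θ0 / 2 - 1 / (100000 * (m : ℝ))) ^ 2 * (2 / (3 * θ0) - 1))) *
    (1 / (1.063 * (1 - c1)))

private lemma auxA (L : ℝ) (h : 16 ≤ L) : 4 ≤ L - 2 * Real.log L := by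
  have hLpos : (0:ℝ) < L := by linarith
  have hsqL : Real.sqrt L ^ 2 = L := Real.sq_sqrt hLpos.le
  have hsq4 : (4:ℝ) ≤ Real.sqrt L := by
    have := Real.sqrt_le_sqrt h
    rwa [show (16:ℝ) = 4 ^ 2 by norm_num, Real.sqrt_sq (by norm_num : (0:ℝ) ≤ 4)] at this
  have h1 : Real.log (Real.sqrt L) ≤ Real.sqrt L - 1 :=
    Real.log_le_sub_one_of_pos (by positivity)
  rw [Real.log_sqrt hLpos.le] at h1
  nlinarith

private lemma auxExp (A : ℝ) (hA4 : (4:ℝ) ≤ A) : Real.exp (-A) ≤ 1 / 2 := by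
  have h1 : (2:ℝ) ≤ Real.exp A := by nlinarith [Real.add_one_le_exp A]
  have h2 : Real.exp (-A) * Real.exp A = 1 := by rw [← Real.exp_add]; simp
  nlinarith [Real.exp_pos (-A)]

private lemma auxG1 (k0 γ A : ℝ) (hk0 : 0 < k0) (hA : 0 < A)
    (hγ0 : 0 < γ) (hγ : 1 / (2 * A) ≤ γ) : k0 / γ ^ 2 ≤ 4 * A ^ 2 * k0 := by
  have h2A : (0:ℝ) < 2 * A := by linarith
  rw [div_le_iff₀ (pow_pos hγ0 2)]
  have h1 : 1 ≤ γ * (2 * A) := (div_le_iff₀ h2A).mp hγ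
  have h2 : 1 * 1 ≤ γ * (2 * A) * (γ * (2 * A)) :=
    mul_le_mul h1 h1 zero_le_one (by positivity)
  nlinarith [hk0, h2]

private lemma auxRecip (x : ℝ) (h : 1 ≤ x) : 1 / (100000 * x) ≤ 1 / 100000 :=
  one_div_le_one_div_of_le (by norm_num) (by nlinarith)

private lemma auxT (θ0 : ℝ) (h1 : 1 / 2 < θ0) (h2 : θ0 < 691 / 1318) :
    (0.27:ℝ) ≤ 2 / (3 * θ0) - 1 := by
  have h3 : (2:ℝ) / 1.5748 ≤ 2 / (3 * θ0) := by
    rw [div_le_div_iff₀ (by norm_num) (by positivity)]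
    nlinarith
  have h4 : (1.27:ℝ) ≤ 2 / 1.5748 := by norm_num
  linarith

private lemma auxD (s t : ℝ) (hs : (0.24:ℝ) ≤ s) (ht : (0.27:ℝ) ≤ t) :
    (0.015552:ℝ) ≤ s ^ 2 * t := by nlinarith

private lemma auxF3 (c1 : ℝ) (h0 : 0 ≤ c1) (h : c1 < 8e-6) :
    1 / (1.063 * (1 - c1)) ≤ 1 ∧ (0:ℝ) < 1.063 * (1 - c1) := by
  constructor
  · rw [div_le_one (by nlinarith)]
    nlinarith
  · nlinarith

private lemma auxBnn (A k0 : ℝ) (hk0 : 0 < k0) : (0:ℝ) ≤ 4 * A ^ 2 * k0 := by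
  nlinarith [sq_nonneg A]

private lemma auxFin (x : ℝ) (h : 1000000 ≤ x) : 4 * x / 0.52427 + 87 ≤ 7.63 * x := by
  rw [div_add' _ _ _ (by norm_num : (0.52427:ℝ) ≠ 0),
    div_le_iff₀ (by norm_num : (0:ℝ) < 0.52427)]
  nlinarith

private lemma auxD1 (θ0 c1 : ℝ) (hθ : 0 < θ0) (hθ1 : θ0 < 1) (hc1 : 0 ≤ c1) :
    θ0 * (1 - c1) ≤ 1 := by nlinarith

-- For all sufficiently large `m`, `log C ≤ 7.63 m + 4 log m + 21 log 2`.
set_option maxHeartbeats 1000000 in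
/-- For all sufficiently large `m`, `log C ≤ 7.63 m + 4 log m + 21 log 2`. -/
theorem logC_bound (θ0 c1 : ℝ)
    (hθ1 : 1 / 2 < θ0) (hθ2 : θ0 < 691 / 1318)
    (hc1 : 0 ≤ c1) (hc2 : c1 < 8e-6) (hlb : θ0 * (1 - c1) > 0.52427) :
    ∃ M : ℕ, ∀ m : ℕ, M ≤ m →
      Real.log (paperC θ0 c1 m) ≤ 7.63 * m + 4 * Real.log m + 21 * Real.log 2 := by
  refine ⟨1000000, fun m hm => ?_⟩
  have hm' : (1000000:ℝ) ≤ (m:ℝ) := by exact_mod_cast hm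
  have hm1 : (1:ℝ) ≤ (m:ℝ) := by linarith
  have hmpos : (0:ℝ) < (m:ℝ) := by linarith
  set d : ℝ := θ0 * (1 - c1) with hd
  have hd0 : (0.52427:ℝ) < d := hlb
  have hdpos : (0:ℝ) < d := by linarith
  have hθpos : (0:ℝ) < θ0 := by linarith
  have hd1 : d ≤ 1 := by
    rw [hd]; exact auxD1 θ0 c1 hθpos (by linarith) hc1
  clear_value d
  set k0 : ℝ := paperK0 θ0 c1 m with hk0def
  have hk0pos : 0 < k0 := by
    rw [hk0def, paperK0]
    positivity
  have hlogm0 : 0 ≤ Real.log m := Real.log_nonneg hm1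
  have hlogm_le : Real.log m ≤ (m:ℝ) - 1 := Real.log_le_sub_one_of_pos hmpos
  have hlogk0 : Real.log k0 = 2 * Real.log m + (4 * m / d + 8) := by
    rw [hk0def, paperK0, ← hd, Real.log_mul (by positivity) (Real.exp_ne_zero _),
      Real.log_pow, Real.log_exp]
    push_cast
    ring
  clear_value k0
  set L : ℝ := Real.log (2 * k0) with hLdef
  have hLval : L = Real.log 2 + (2 * Real.log m + (4 * m / d + 8)) := by
    rw [hLdef, Real.log_mul two_ne_zero hk0pos.ne', hlogk0]
  set A : ℝ := paperA' k0 with hAdef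
  have hAval : A = L - 2 * Real.log L := by rw [hAdef, paperA', ← hLdef]
  clear_value L
  have hlog2 : (0:ℝ) ≤ Real.log 2 := Real.log_nonneg (by norm_num)
  have h4md : 4 * (m:ℝ) ≤ 4 * m / d := by
    have := div_le_div_of_nonneg_left (by positivity : (0:ℝ) ≤ 4 * (m:ℝ)) hdpos hd1
    simpa using this
  have hLlb : 4 * (m:ℝ) + 8 ≤ L := by rw [hLval]; linarith
  have hL16 : (16:ℝ) ≤ L := by linarith
  have hLpos : (0:ℝ) < L := by linarith
  have hA4 : (4:ℝ) ≤ A := by rw [hAval]; exact auxA L hL16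
  have hApos : (0:ℝ) < A := by linarith
  have hlogL0 : 0 ≤ Real.log L := Real.log_nonneg (by linarith)
  have hAleL : A ≤ L := by rw [hAval]; linarith
  -- gamma
  have hT : paperA' k0 * paperT' k0 = Real.exp A - 1 := by
    rw [paperT', ← hAdef]
    field_simp
  have hγval : paperGamma' k0 = (1 - Real.exp (-A)) / A := by
    rw [paperGamma', hT, ← hAdef]
    have h1 : 1 + (Real.exp A - 1) = Real.exp A := by ring
    rw [h1, Real.exp_neg, one_div (Real.exp A)]
    ring
  clear_value A
  have hexpA : Real.exp (-A) ≤ 1 / 2 := auxExp A hA4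
  have h2A : (0:ℝ) < 2 * A := by linarith
  have hγlb : 1 / (2 * A) ≤ paperGamma' k0 := by
    rw [hγval]
    have h1 : (1:ℝ)/2 ≤ 1 - Real.exp (-A) := by linarith
    calc 1 / (2 * A) = (1/2) / A := by ring
    _ ≤ (1 - Real.exp (-A)) / A := by gcongr
  have hγpos : 0 < paperGamma' k0 := lt_of_lt_of_le (div_pos one_pos h2A) hγlb
  have hG1 : k0 / paperGamma' k0 ^ 2 ≤ 4 * A ^ 2 * k0 :=
    auxG1 k0 (paperGamma' k0) A hk0pos hApos hγpos hγlb
  -- second factor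
  have hs : (0.24:ℝ) ≤ θ0 / 2 - 1 / (100000 * (m:ℝ)) := by
    have h1 := auxRecip (m:ℝ) hm1
    have h2 : (1:ℝ)/100000 ≤ 0.01 := by norm_num
    linarith
  have ht : (0.27:ℝ) ≤ 2 / (3 * θ0) - 1 := auxT θ0 hθ1 hθ2
  set D : ℝ := (θ0 / 2 - 1 / (100000 * (m:ℝ))) ^ 2 * (2 / (3 * θ0) - 1) with hDdef
  have hDlb : (0.015552:ℝ) ≤ D := by
    rw [hDdef]; exact auxD _ _ hs ht
  clear_value D
  have hDpos : 0 < D := by linarith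
  have hF2 : (0.168:ℝ) / D ≤ 11 := by
    rw [div_le_iff₀ hDpos]
    linarith
  have hF2pos : (0:ℝ) < 0.168 / D := div_pos (by norm_num) hDpos
  have hF3 : 1 / (1.063 * (1 - c1)) ≤ 1 := (auxF3 c1 hc1 hc2).1
  have hF3pos : (0:ℝ) < 1 / (1.063 * (1 - c1)) :=
    div_pos one_pos (auxF3 c1 hc1 hc2).2
  have hG1pos : 0 < k0 / paperGamma' k0 ^ 2 := div_pos hk0pos (pow_pos hγpos 2)
  have hCpos : 0 < paperC θ0 c1 m := by
    rw [paperC, ← hk0def, ← hDdef]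
    exact mul_pos (mul_pos hG1pos hF2pos) hF3pos
  have hBnn : (0:ℝ) ≤ 4 * A ^ 2 * k0 := auxBnn A k0 hk0pos
  have hCle : paperC θ0 c1 m ≤ 44 * A ^ 2 * k0 := by
    have h := mul_le_mul (mul_le_mul hG1 hF2 hF2pos.le hBnn) hF3 hF3pos.le
      (by linarith : (0:ℝ) ≤ 4 * A ^ 2 * k0 * 11)
    rw [paperC, ← hk0def, ← hDdef]
    calc k0 / paperGamma' k0 ^ 2 * (0.168 / D) * (1 / (1.063 * (1 - c1)))
        ≤ 4 * A ^ 2 * k0 * 11 * 1 := h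
    _ = 44 * A ^ 2 * k0 := by ring
  have hlogC : Real.log (paperC θ0 c1 m) ≤ Real.log (44 * A ^ 2 * k0) :=
    Real.log_le_log hCpos hCle
  have hA2pos : (0:ℝ) < A ^ 2 := pow_pos hApos 2
  have h44A : (44:ℝ) * A ^ 2 ≠ 0 := by positivity
  have hlogexp : Real.log (44 * A ^ 2 * k0) = Real.log 44 + 2 * Real.log A + Real.log k0 := by
    rw [Real.log_mul h44A hk0pos.ne',
      Real.log_mul (by norm_num : (44:ℝ) ≠ 0) hA2pos.ne', Real.log_pow]
    push_cast
    ring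
  have hlog44 : Real.log 44 ≤ 43 := by
    linarith [Real.log_le_sub_one_of_pos (by norm_num : (0:ℝ) < 44)]
  have hL19 : L ≤ 19 * m := by
    have hlog2' : Real.log 2 ≤ 1 := by
      linarith [Real.log_le_sub_one_of_pos (by norm_num : (0:ℝ) < 2)]
    have h8 : 4 * (m:ℝ) / d ≤ 8 * m := by
      have := div_le_div_of_nonneg_left (by positivity : (0:ℝ) ≤ 4 * (m:ℝ))
        (by norm_num : (0:ℝ) < 0.5) (by linarith : (0.5:ℝ) ≤ d)
      calc 4 * (m:ℝ) / d ≤ 4 * m / 0.5 := this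
      _ = 8 * m := by ring
    rw [hLval]; linarith
  have hlogA : Real.log A ≤ 18 + Real.log m := by
    have h1 : Real.log A ≤ Real.log L := Real.log_le_log hApos hAleL
    have h2 : Real.log L ≤ Real.log (19 * m) := Real.log_le_log hLpos hL19
    have h3 : Real.log (19 * (m:ℝ)) = Real.log 19 + Real.log m := by
      rw [Real.log_mul (by norm_num) (by positivity)]
    have h4 : Real.log 19 ≤ 18 := by
      linarith [Real.log_le_sub_one_of_pos (by norm_num : (0:ℝ) < 19)]
    linarith
  have hfin : 4 * (m:ℝ) / d + 87 ≤ 7.63 * m := by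
    have h1 : 4 * (m:ℝ) / d ≤ 4 * m / 0.52427 :=
      div_le_div_of_nonneg_left (by positivity) (by norm_num) hd0.le
    have h2 := auxFin (m:ℝ) hm'
    linarith
  calc Real.log (paperC θ0 c1 m) ≤ Real.log 44 + 2 * Real.log A + Real.log k0 := by
        rw [← hlogexp]; exact hlogC
  _ ≤ 43 + 2 * (18 + Real.log m) + (2 * Real.log m + (4 * m / d + 8)) := by
        rw [hlogk0]; linarith
  _ ≤ 7.63 * m + 4 * Real.log m + 21 * Real.log 2 := by linarith
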